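/- Let A be a unital C*-algebra over ℂ and ω : A → ℂ a state. Suppose (π₁, H₁, Ω₁) and (π₂, H₂, Ω₂) are two cyclic representations of ω: for i = 1, 2, Hᵢ is a complex Hilbert space, πᵢ : A → B(Hᵢ) is a unital star-algebra homomorphism, Ωᵢ ∈ Hᵢ is a unit vector cyclic for πᵢ, and ω(a) = ⟨Ωᵢ, πᵢ(a)Ωᵢ⟩ for all a ∈ A. Then there exists a unitary operator U : H₁ → H₂ with U Ω₁ = Ω₂ and U π₁(a) = π₂(a) U for all a ∈ A. -/

import Mathlib

open scoped ComplexOrder InnerProductSpace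

section Orbit

variable {𝕜 A H F : Type*} [NontriviallyNormedField 𝕜] [Semiring A] [Algebra 𝕜 A]
  [NormedAddCommGroup H] [NormedSpace 𝕜 H] [FunLike F A (H →L[𝕜] H)] [AlgHomClass F 𝕜 A (H →L[𝕜] H)]

@[simps]
def orbitMap (π : F) (Ω : H) : A →ₗ[𝕜] H where
  toFun a := π a Ω
  map_add' a b := by simp
  map_smul' c a := by simp

theorem denseRange_orbitMap {π : F} {Ω : H}
    (hcyc : Dense (Submodule.span 𝕜 (Set.range fun a => π a Ω) : Set H)) :
    DenseRange (orbitMap π Ω) := by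
  rwa [DenseRange, ← LinearMap.coe_range, ← Submodule.span_eq (LinearMap.range _),
    LinearMap.coe_range]

theorem comp_eq_comp_of_map_orbit {H₂ F₂ : Type*} [NormedAddCommGroup H₂] [NormedSpace 𝕜 H₂]
    [FunLike F₂ A (H₂ →L[𝕜] H₂)] [AlgHomClass F₂ 𝕜 A (H₂ →L[𝕜] H₂)]
    {π₁ : F} {π₂ : F₂} {Ω₁ : H} {Ω₂ : H₂}
    (hcyc : Dense (Submodule.span 𝕜 (Set.range fun a => π₁ a Ω₁) : Set H))
    {U : H →L[𝕜] H₂} (hU : ∀ a, U (π₁ a Ω₁) = π₂ a Ω₂) (a : A) :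
    U ∘L π₁ a = π₂ a ∘L U := by
  refine ContinuousLinearMap.ext_on hcyc ?_
  rintro _ ⟨b, rfl⟩
  simp only [ContinuousLinearMap.comp_apply, ← mul_apply_eq_comp, ← map_mul, hU]

end Orbit

section StarRep

variable {𝕜 A H F : Type*} [RCLike 𝕜] [Mul A] [Star A]
  [NormedAddCommGroup H] [InnerProductSpace 𝕜 H] [CompleteSpace H]
  [FunLike F A (H →L[𝕜] H)] [MulHomClass F A (H →L[𝕜] H)] [StarHomClass F A (H →L[𝕜] H)]

theorem inner_apply_apply_eq (π : F) (Ω : H) (a b : A) :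
    ⟪π a Ω, π b Ω⟫_𝕜 = ⟪Ω, π (star a * b) Ω⟫_𝕜 := by
  rw [map_mul, map_star, mul_apply_eq_comp, ContinuousLinearMap.star_eq_adjoint,
    ContinuousLinearMap.adjoint_inner_right]

theorem norm_apply_eq_of_inner_eq {H₂ F₂ : Type*} [NormedAddCommGroup H₂] [InnerProductSpace 𝕜 H₂]
    [CompleteSpace H₂] [FunLike F₂ A (H₂ →L[𝕜] H₂)] [MulHomClass F₂ A (H₂ →L[𝕜] H₂)]
    [StarHomClass F₂ A (H₂ →L[𝕜] H₂)]
    {π₁ : F} {π₂ : F₂} {Ω₁ : H} {Ω₂ : H₂} (h : ∀ a, ⟪Ω₁, π₁ a Ω₁⟫_𝕜 = ⟪Ω₂, π₂ a Ω₂⟫_𝕜)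
    (a : A) : ‖π₁ a Ω₁‖ = ‖π₂ a Ω₂‖ := by
  rw [norm_eq_sqrt_re_inner (𝕜 := 𝕜), norm_eq_sqrt_re_inner (𝕜 := 𝕜), inner_apply_apply_eq,
    inner_apply_apply_eq, h]

end StarRep

theorem gns_uniqueness_general {A : Type*} [CStarAlgebra A]
    (ω : A →L[ℂ] ℂ)
    {H₁ : Type*} [NormedAddCommGroup H₁] [InnerProductSpace ℂ H₁] [CompleteSpace H₁]
    {H₂ : Type*} [NormedAddCommGroup H₂] [InnerProductSpace ℂ H₂] [CompleteSpace H₂]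
    (π₁ : A →⋆ₐ[ℂ] (H₁ →L[ℂ] H₁)) (π₂ : A →⋆ₐ[ℂ] (H₂ →L[ℂ] H₂))
    (Ω₁ : H₁) (Ω₂ : H₂)
    (hcyc₁ : Dense ((Submodule.span ℂ (Set.range fun a : A => π₁ a Ω₁) : Submodule ℂ H₁) : Set H₁))
    (hcyc₂ : Dense ((Submodule.span ℂ (Set.range fun a : A => π₂ a Ω₂) : Submodule ℂ H₂) : Set H₂))
    (hω₁ : ∀ a : A, ω a = ⟪Ω₁, π₁ a Ω₁⟫_ℂ)
    (hω₂ : ∀ a : A, ω a = ⟪Ω₂, π₂ a Ω₂⟫_ℂ) :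
    ∃ U : H₁ ≃ₗᵢ[ℂ] H₂, U Ω₁ = Ω₂ ∧ ∀ (a : A) (x : H₁), U (π₁ a x) = π₂ a (U x) := by
  have hnorm (a : A) : ‖orbitMap π₂ Ω₂ a‖ = ‖orbitMap π₁ Ω₁ a‖ :=
    norm_apply_eq_of_inner_eq (fun a => by rw [← hω₁, ← hω₂]) a |>.symm
  -- Each `Hᵢ` completes `A` for the seminorm `a ↦ ‖πᵢ a Ωᵢ‖`; these agree, so the identity extends.
  let U : H₁ ≃ₗᵢ[ℂ] H₂ := (LinearEquiv.refl ℂ A).extendOfIsometry _ _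
    (denseRange_orbitMap hcyc₁) (denseRange_orbitMap hcyc₂) hnorm
  have hU (a : A) : U (π₁ a Ω₁) = π₂ a Ω₂ := LinearEquiv.extendOfIsometry_eq _ _ _ _ _ _ a
  refine ⟨U, by simpa using hU 1, fun a x => ?_⟩
  have hcomm := comp_eq_comp_of_map_orbit hcyc₁ (U := U.toLinearIsometry.toContinuousLinearMap) hU a
  exact congr($hcomm x)

/-- **The GNS construction (uniqueness).**
If `(π₁, H₁, Ω₁)` and `(π₂, H₂, Ω₂)` are two cyclic representations of the same state `ω`
on a unital C*-algebra `A`, then there is a unitary `U : H₁ → H₂` (a surjective linear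
isometry) with `U Ω₁ = Ω₂` and `U ∘ π₁ a = π₂ a ∘ U` for all `a ∈ A`. -/
theorem gns_uniqueness {A : Type*} [CStarAlgebra A]
    (ω : A →L[ℂ] ℂ) (hω1 : ω 1 = 1) (hωpos : ∀ a : A, 0 ≤ ω (star a * a))
    {H₁ : Type*} [NormedAddCommGroup H₁] [InnerProductSpace ℂ H₁] [CompleteSpace H₁]
    {H₂ : Type*} [NormedAddCommGroup H₂] [InnerProductSpace ℂ H₂] [CompleteSpace H₂]
    (π₁ : A →⋆ₐ[ℂ] (H₁ →L[ℂ] H₁)) (π₂ : A →⋆ₐ[ℂ] (H₂ →L[ℂ] H₂))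
    (Ω₁ : H₁) (Ω₂ : H₂) (hΩ₁ : ‖Ω₁‖ = 1) (hΩ₂ : ‖Ω₂‖ = 1)
    (hcyc₁ : Dense ((Submodule.span ℂ (Set.range fun a : A => π₁ a Ω₁) : Submodule ℂ H₁) : Set H₁))
    (hcyc₂ : Dense ((Submodule.span ℂ (Set.range fun a : A => π₂ a Ω₂) : Submodule ℂ H₂) : Set H₂))
    (hω₁ : ∀ a : A, ω a = ⟪Ω₁, π₁ a Ω₁⟫_ℂ)
    (hω₂ : ∀ a : A, ω a = ⟪Ω₂, π₂ a Ω₂⟫_ℂ) :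
    ∃ U : H₁ ≃ₗᵢ[ℂ] H₂, U Ω₁ = Ω₂ ∧ ∀ (a : A) (x : H₁), U (π₁ a x) = π₂ a (U x) :=
  gns_uniqueness_general ω π₁ π₂ Ω₁ Ω₂ hcyc₁ hcyc₂ hω₁ hω₂
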